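/- For every convex body K in ℝⁿ, vol(K - K) ≤ binom(2n, n) · vol(K). -/

import Mathlib

/-!
Put `D = K - K` and let `g` be its gauge. Every `z ∈ D` can be written as `z = g z • (a - b)`
with `a, b ∈ K`, so `K ∩ (z + K)` contains the translate `g z • a + (1 - g z) • K`, whence
`vol (K ∩ (z + K)) ≥ (1 - g z) ^ n vol K`. Integrating over `z ∈ D` and using
`∫ vol (K ∩ (z + K)) dz = vol K ^ 2` gives `vol K ≥ ∫_D (1 - g) ^ n`. By the layer-cake formula
the superlevel sets `{1 - g > t} ⊇ (1 - t) • interior D` bound this integral from below by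
`vol D · ∫₀¹ n tⁿ⁻¹ (1 - t)ⁿ dt = vol D / binom(2n, n)`, a Beta integral.
-/

open MeasureTheory Pointwise ENNReal Module Topology

theorem IsCompact.sub {G : Type*} [AddGroup G] [TopologicalSpace G] [IsTopologicalAddGroup G]
    {s t : Set G} (hs : IsCompact s) (ht : IsCompact t) : IsCompact (s - t) := by
  rw [sub_eq_add_neg]
  exact hs.add ht.neg

open Nat in
theorem integral_pow_mul_one_sub_pow (a b : ℕ) :
    ∫ x in (0 : ℝ)..1, x ^ a * (1 - x) ^ b = a ! * b ! / (a + b + 1)! := by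
  have hβ := Complex.betaIntegral_eval_nat_add_one_right (u := a + 1) (by simp; positivity) b
  have hprod :
      (a ! : ℂ) * ∏ j ∈ Finset.range (b + 1), ((a : ℂ) + 1 + j) = (a + b + 1)! := by
    rw [add_assoc a b 1, ← Nat.factorial_mul_ascFactorial, Nat.ascFactorial_eq_prod_range]
    push_cast
    ring
  rw [← mul_div_mul_left _ _ (Nat.cast_ne_zero.2 (factorial_ne_zero a)), hprod] at hβ
  simp only [Complex.betaIntegral, add_sub_cancel_right] at hβ
  norm_cast at hβ
  rw [intervalIntegral.integral_ofReal] at hβ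
  apply Complex.ofReal_injective
  simp [hβ]

theorem integral_natCast_mul_pow_pred {n : ℕ} (hn : n ≠ 0) (x : ℝ) :
    ∫ t in (0 : ℝ)..x, n * t ^ (n - 1) = x ^ n := by
  rw [intervalIntegral.integral_const_mul, integral_pow,
    Nat.sub_add_cancel (Nat.pos_of_ne_zero hn), zero_pow hn, sub_zero,
    Nat.cast_pred (Nat.pos_of_ne_zero hn), sub_add_cancel,
    mul_div_cancel₀ _ (Nat.cast_ne_zero.2 hn)]

theorem integral_mul_pow_mul_one_sub_pow_eq_inv_choose {n : ℕ} (hn : n ≠ 0) :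
    ∫ t in (0 : ℝ)..1, n * t ^ (n - 1) * (1 - t) ^ n = ((2 * n).choose n : ℝ)⁻¹ := by
  simp_rw [mul_assoc, intervalIntegral.integral_const_mul, integral_pow_mul_one_sub_pow,
    show n - 1 + n + 1 = 2 * n by omega, Nat.cast_choose ℝ (show n ≤ 2 * n by omega),
    show 2 * n - n = n by omega, inv_div]
  rw [← Nat.mul_factorial_pred hn]
  push_cast
  ring

theorem lintegral_Ioo_ofReal_mul_pow_mul_one_sub_pow_eq_inv_choose {n : ℕ} (hn : n ≠ 0) :
    ∫⁻ t in Set.Ioo (0 : ℝ) 1, ENNReal.ofReal (n * t ^ (n - 1) * (1 - t) ^ n) =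
      ((2 * n).choose n : ℝ≥0∞)⁻¹ := by
  rw [← ofReal_integral_eq_lintegral_ofReal
      ((by fun_prop : Continuous _).integrableOn_Icc.mono_set Set.Ioo_subset_Icc_self)
      (ae_restrict_of_forall_mem measurableSet_Ioo fun t ht => by
        have := ht.1.le; have := sub_nonneg.2 ht.2.le; positivity),
    ← integral_Ioc_eq_integral_Ioo, ← intervalIntegral.integral_of_le zero_le_one,
    integral_mul_pow_mul_one_sub_pow_eq_inv_choose hn,
    ofReal_inv_of_pos (mod_cast Nat.choose_pos (by omega)), ofReal_natCast]

theorem lintegral_measure_inter_vadd {G : Type*} [AddCommGroup G] [MeasurableSpace G]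
    [MeasurableAdd₂ G] [MeasurableNeg G] (μ : Measure G) [SFinite μ] [μ.IsAddLeftInvariant]
    {s t : Set G} (hs : MeasurableSet s) (ht : MeasurableSet t) :
    ∫⁻ z, μ (s ∩ (z +ᵥ t)) ∂μ = μ s * μ t := by
  -- `(y, w) ↦ (y - w, y)` is a measure-preserving bijection from `s ×ˢ t` onto the set of pairs
  -- `(z, y)` with `y ∈ s ∩ (z +ᵥ t)`
  have hshear := (measurePreserving_prod_add μ μ).comp (measurePreserving_sub_prod μ μ)
  set S := {p : G × G | p.2 ∈ s ∧ p.2 - p.1 ∈ t}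
  have hS : MeasurableSet S := (hs.preimage measurable_snd).inter
    (ht.preimage (measurable_snd.sub measurable_fst))
  have hslice : ∀ z, s ∩ (z +ᵥ t) = Prod.mk z ⁻¹' S := fun z => by
    ext y; simp [S, Set.mem_vadd_set_iff_neg_vadd_mem, sub_eq_neg_add]
  simp_rw [hslice, ← Measure.prod_apply hS, ← hshear.measure_preimage hS.nullMeasurableSet,
    ← Measure.prod_prod]
  congr 1
  ext p
  simp [S]

section

variable {E : Type*} [NormedAddCommGroup E] [NormedSpace ℝ E]

theorem exists_mem_eq_gauge_smul {D : Set E} (hD : Convex ℝ D) (hDc : IsClosed D)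
    (hDb : Bornology.IsBounded D) (hD0 : D ∈ 𝓝 0) (z : E) :
    ∃ w ∈ D, z = gauge D z • w := by
  rcases (gauge_nonneg z).eq_or_lt with hz0 | hzpos
  · have : z = 0 := (gauge_eq_zero (absorbent_nhds_zero hD0)
      ((NormedSpace.isVonNBounded_iff ℝ).2 hDb)).1 hz0.symm
    exact ⟨0, mem_of_mem_nhds hD0, by simp [this]⟩
  refine ⟨(gauge D z)⁻¹ • z, ?_, by rw [smul_smul, mul_inv_cancel₀ hzpos.ne', one_smul]⟩
  have hw : gauge D ((gauge D z)⁻¹ • z) = 1 := by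
    rw [gauge_smul_of_nonneg (inv_nonneg.2 hzpos.le), smul_eq_mul, inv_mul_cancel₀ hzpos.ne']
  simpa only [hDc.closure_eq] using (gauge_le_one_iff_mem_closure hD hD0).1 hw.le

variable [MeasurableSpace E] [BorelSpace E] [FiniteDimensional ℝ E] (μ : Measure E)
  [μ.IsAddHaarMeasure]

theorem Convex.ofReal_one_sub_pow_mul_le_measure_inter_vadd {K : Set E} (hK : Convex ℝ K)
    {a b : E} (ha : a ∈ K) (hb : b ∈ K) {t : ℝ} (ht0 : 0 ≤ t) (ht1 : t ≤ 1) :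
    ENNReal.ofReal ((1 - t) ^ finrank ℝ E) * μ K ≤ μ (K ∩ ((t • (a - b)) +ᵥ K)) := by
  have hsub : (t • a) +ᵥ (1 - t) • K ⊆ K ∩ ((t • (a - b)) +ᵥ K) := by
    rintro _ ⟨_, ⟨y, hy, rfl⟩, rfl⟩
    refine ⟨hK ha hy ht0 (by linarith) (by ring), ?_⟩
    rw [Set.mem_vadd_set_iff_neg_vadd_mem]
    convert hK hb hy ht0 (sub_nonneg.2 ht1) (by ring) using 1
    simp only [vadd_eq_add, smul_sub]
    abel
  calc ENNReal.ofReal ((1 - t) ^ finrank ℝ E) * μ K = μ ((t • a) +ᵥ (1 - t) • K) := by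
        rw [measure_vadd, Measure.addHaar_smul, abs_of_nonneg (pow_nonneg (by linarith) _)]
    _ ≤ μ (K ∩ ((t • (a - b)) +ᵥ K)) := measure_mono hsub

theorem Convex.ofReal_one_sub_pow_mul_le_restrict_setOf_lt_one_sub_gauge {D : Set E}
    (hD : Convex ℝ D) (hD0 : D ∈ 𝓝 0) {s : ℝ} (hs : s ∈ Set.Ioo 0 1) :
    ENNReal.ofReal ((1 - s) ^ finrank ℝ E) * μ D ≤ μ.restrict D {z | s < 1 - gauge D z} := by
  have hincl : (1 - s) • interior D ⊆ {z | s < 1 - gauge D z} ∩ D := by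
    rintro _ ⟨w, hw, rfl⟩
    have hgw : gauge D w < 1 := (gauge_lt_one_iff_mem_interior hD hD0).2 hw
    refine ⟨?_, hD.smul_mem_of_zero_mem (mem_of_mem_nhds hD0) (interior_subset hw)
      ⟨by linarith [hs.2], by linarith [hs.1]⟩⟩
    change s < 1 - gauge D _
    rw [gauge_smul_of_nonneg (by linarith [hs.2]), smul_eq_mul]
    nlinarith [hs.2]
  calc ENNReal.ofReal ((1 - s) ^ finrank ℝ E) * μ D = μ ((1 - s) • interior D) := by
        rw [Measure.addHaar_smul, abs_of_nonneg (pow_nonneg (by linarith [hs.2]) _),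
          measure_interior_of_null_frontier (hD.addHaar_frontier μ)]
    _ ≤ μ ({z | s < 1 - gauge D z} ∩ D) := measure_mono hincl
    _ ≤ μ.restrict D {z | s < 1 - gauge D z} := Measure.le_restrict_apply _ _

theorem Convex.measure_le_choose_mul_lintegral_one_sub_gauge_pow {D : Set E} (hD : Convex ℝ D)
    (hD0 : D ∈ 𝓝 0) :
    μ D ≤ (2 * finrank ℝ E).choose (finrank ℝ E) *
      ∫⁻ z in D, ENNReal.ofReal ((1 - gauge D z) ^ finrank ℝ E) ∂μ := by
  set n := finrank ℝ E
  rcases eq_or_ne n 0 with hn | hn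
  · simp [hn]
  have hcake := lintegral_comp_eq_lintegral_meas_lt_mul (μ.restrict D)
    (f := fun z => 1 - gauge D z) (g := fun t => n * t ^ (n - 1))
    ((ae_restrict_mem₀ (hD.nullMeasurableSet μ)).mono fun z hz =>
      sub_nonneg.2 (gauge_le_one_of_mem hz))
    (continuous_const.sub (continuous_gauge hD hD0)).aemeasurable
    (fun _ _ => (by fun_prop : Continuous _).intervalIntegrable _ _)
    (ae_restrict_of_forall_mem measurableSet_Ioi fun t (ht : 0 < t) => by positivity)
  simp only [integral_natCast_mul_pow_pred hn] at hcake
  have hchoose : ((2 * n).choose n : ℝ≥0∞) ≠ 0 := mod_cast (Nat.choose_pos (by omega)).ne'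
  calc μ D = (2 * n).choose n * (((2 * n).choose n : ℝ≥0∞)⁻¹ * μ D) := by
        rw [← mul_assoc, ENNReal.mul_inv_cancel hchoose (natCast_ne_top _), one_mul]
    _ = (2 * n).choose n *
        ∫⁻ t in Set.Ioo 0 1, ENNReal.ofReal (n * t ^ (n - 1) * (1 - t) ^ n) * μ D := by
        rw [← lintegral_Ioo_ofReal_mul_pow_mul_one_sub_pow_eq_inv_choose hn,
          lintegral_mul_const _ (by fun_prop)]
    _ ≤ (2 * n).choose n * ∫⁻ t in Set.Ioo 0 1,
        μ.restrict D {z | t < 1 - gauge D z} * ENNReal.ofReal (n * t ^ (n - 1)) := by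
        refine mul_le_mul_right (lintegral_mono_ae (ae_restrict_of_forall_mem measurableSet_Ioo
          fun t (ht : t ∈ Set.Ioo 0 1) => ?_)) _
        have := ht.1.le
        calc ENNReal.ofReal (n * t ^ (n - 1) * (1 - t) ^ n) * μ D
            = ENNReal.ofReal ((1 - t) ^ n) * μ D * ENNReal.ofReal (n * t ^ (n - 1)) := by
              rw [ofReal_mul (by positivity)]; ring
          _ ≤ _ := by
              gcongr
              exact hD.ofReal_one_sub_pow_mul_le_restrict_setOf_lt_one_sub_gauge μ hD0 ht
    _ ≤ (2 * n).choose n * ∫⁻ t in Set.Ioi 0,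
        μ.restrict D {z | t < 1 - gauge D z} * ENNReal.ofReal (n * t ^ (n - 1)) := by
        gcongr
        exact Set.Ioo_subset_Ioi_self
    _ = _ := by rw [hcake]

theorem IsCompact.ofReal_one_sub_gauge_pow_mul_le_measure_inter_vadd {K : Set E}
    (hKc : IsCompact K) (hK : Convex ℝ K) (hD0 : K - K ∈ 𝓝 0) {z : E} (hz : z ∈ K - K) :
    ENNReal.ofReal ((1 - gauge (K - K) z) ^ finrank ℝ E) * μ K ≤ μ (K ∩ (z +ᵥ K)) := by
  have hKK : IsCompact (K - K) := hKc.sub hKc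
  obtain ⟨_, ⟨a, ha, b, hb, rfl⟩, hzab⟩ :=
    exists_mem_eq_gauge_smul (hK.sub hK) hKK.isClosed hKK.isBounded hD0 z
  conv_rhs => rw [hzab]
  exact hK.ofReal_one_sub_pow_mul_le_measure_inter_vadd μ ha hb (gauge_nonneg z)
    (gauge_le_one_of_mem hz)

end

theorem stmt6 (n : ℕ) (K : Set (EuclideanSpace ℝ (Fin n)))
    (hK : IsCompact K) (hconv : Convex ℝ K) (hint : (interior K).Nonempty) :
    volume (K - K) ≤ (Nat.choose (2 * n) n : ℝ≥0∞) * volume K := by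
  have hKm : MeasurableSet K := hK.measurableSet
  have hμK : volume K ≠ 0 := (Measure.measure_pos_of_nonempty_interior _ hint).ne'
  have hD0 : K - K ∈ 𝓝 0 :=
    Measure.sub_mem_nhds_zero_of_addHaar_pos volume K hKm (pos_iff_ne_zero.2 hμK)
  have hlayer := (hconv.sub hconv).measure_le_choose_mul_lintegral_one_sub_gauge_pow volume hD0
  have hinter := fun z (hz : z ∈ K - K) =>
    hK.ofReal_one_sub_gauge_pow_mul_le_measure_inter_vadd volume hconv hD0 hz
  simp only [finrank_euclideanSpace_fin] at hlayer hinter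
  refine (ENNReal.mul_le_mul_iff_left hμK hK.measure_lt_top.ne).1 ?_
  calc volume (K - K) * volume K
      ≤ (2 * n).choose n * (∫⁻ z in K - K, ENNReal.ofReal ((1 - gauge (K - K) z) ^ n)) *
          volume K := by gcongr
    _ = (2 * n).choose n *
          ∫⁻ z in K - K, ENNReal.ofReal ((1 - gauge (K - K) z) ^ n) * volume K := by
        rw [mul_assoc, lintegral_mul_const' _ _ hK.measure_lt_top.ne]
    _ ≤ (2 * n).choose n * ∫⁻ z in K - K, volume (K ∩ (z +ᵥ K)) :=
        mul_le_mul_right (setLIntegral_mono' (hK.sub hK).measurableSet hinter) _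
    _ ≤ (2 * n).choose n * ∫⁻ z, volume (K ∩ (z +ᵥ K)) :=
        mul_le_mul_right (setLIntegral_le_lintegral _ _) _
    _ = (2 * n).choose n * volume K * volume K := by
        rw [lintegral_measure_inter_vadd volume hKm hKm, mul_assoc]
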